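/- (Extreme value theorem for GSF) Let f : X → ⟨ρ⟩ℝ be a GSF defined on X ⊆ ⟨ρ⟩ℝⁿ, and let ∅ ≠ K = [K_ε] ⊆ X be an internal set generated by a sharply bounded net (K_ε) of compact sets K_ε ⊆ ℝⁿ. Then there exist m, M ∈ K such that f(m) ≤ f(x) ≤ f(M) for all x ∈ K. -/
import Mathlib


noncomputable section

open Set Filter Topology MeasureTheory

/-- The index set predicate: `ε ∈ (0,1]`. -/
def II (ε : ℝ) : Prop := 0 < ε ∧ ε ≤ 1

/-- A property `P ε` holds "for `ε` small". -/
def EvSmall (P : ℝ → Prop) : Prop :=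
  ∃ ε₀ : ℝ, 0 < ε₀ ∧ ε₀ ≤ 1 ∧ ∀ ε : ℝ, 0 < ε → ε ≤ ε₀ → P ε

/-- A gauge: a net `ρ` with values in `(0,1]` tending to `0` as `ε → 0⁺`. -/
structure IsGauge (ρ : ℝ → ℝ) : Prop where
  pos : ∀ ε, II ε → 0 < ρ ε
  le_one : ∀ ε, II ε → ρ ε ≤ 1
  tendsto_zero : Filter.Tendsto ρ (nhdsWithin 0 (Set.Ioi 0)) (nhds 0)

/-- A `ρ`-moderate net with values in a normed space. -/
def Moderate (ρ : ℝ → ℝ) {E : Type*} [NormedAddCommGroup E] (x : ℝ → E) : Prop :=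
  ∃ N : ℕ, EvSmall (fun ε => ‖x ε‖ ≤ ρ ε ^ (-(N : ℤ)))

/-- `ρ`-equivalence of nets. -/
def REquiv (ρ : ℝ → ℝ) {E : Type*} [NormedAddCommGroup E] (x y : ℝ → E) : Prop :=
  ∀ m : ℕ, EvSmall (fun ε => ‖x ε - y ε‖ ≤ ρ ε ^ m)

/-- The type of `ρ`-moderate nets. -/
abbrev ModNet (ρ : ℝ → ℝ) (E : Type*) [NormedAddCommGroup E] : Type _ :=
  {x : ℝ → E // Moderate ρ x}

/-- The Robinson–Colombeau ring of generalized points `⟨ρ⟩E`. -/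
def RC (ρ : ℝ → ℝ) (E : Type*) [NormedAddCommGroup E] : Type _ :=
  Quot (fun x y : ModNet ρ E => REquiv ρ x.1 y.1)

/-- The class `[x_ε]` of a moderate net. -/
def RC.mk {ρ : ℝ → ℝ} {E : Type*} [NormedAddCommGroup E] (x : ModNet ρ E) : RC ρ E :=
  Quot.mk _ x

theorem moderate_const_zero (ρ : ℝ → ℝ) {E : Type*} [NormedAddCommGroup E] :
    Moderate ρ (fun _ : ℝ => (0 : E)) := by
  refine ⟨0, 1, one_pos, le_rfl, fun ε _ _ => ?_⟩
  simp

/-- The zero generalized point. -/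
def RC.zero (ρ : ℝ → ℝ) (E : Type*) [NormedAddCommGroup E] : RC ρ E :=
  RC.mk ⟨fun _ => 0, moderate_const_zero ρ⟩

/-- The order: `x ≤ y` iff there are representatives with `x_ε ≤ y_ε` for all `ε`. -/
def RC.Le {ρ : ℝ → ℝ} (x y : RC ρ ℝ) : Prop :=
  ∃ a b : ModNet ρ ℝ, RC.mk a = x ∧ RC.mk b = y ∧ ∀ ε, II ε → a.1 ε ≤ b.1 ε

/-- `x` is invertible in the ring `⟨ρ⟩ℝ`. -/
def RC.IsInvertible {ρ : ℝ → ℝ} (x : RC ρ ℝ) : Prop :=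
  ∃ a : ModNet ρ ℝ, RC.mk a = x ∧
    ∃ b : ℝ → ℝ, Moderate ρ b ∧ REquiv ρ (fun ε => a.1 ε * b ε) (fun _ => (1 : ℝ))

/-- `r` is a nonnegative invertible generalized number, i.e. `r > 0`. -/
def RC.PosInv {ρ : ℝ → ℝ} (r : RC ρ ℝ) : Prop :=
  RC.IsInvertible r ∧ RC.Le (RC.zero ρ ℝ) r

/-- Strict order: `x < y` iff some nonnegative invertible `r` satisfies `r ≤ y - x`. -/
def RC.Lt {ρ : ℝ → ℝ} (x y : RC ρ ℝ) : Prop :=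
  ∃ r : RC ρ ℝ, RC.PosInv r ∧
    ∃ a b c : ModNet ρ ℝ, RC.mk a = x ∧ RC.mk b = y ∧ RC.mk c = r ∧
      ∀ ε, II ε → c.1 ε ≤ b.1 ε - a.1 ε

/-- `≤` between (the classes of) two scalar nets: `u ≤ v + z` for some negligible `z`. -/
def NetLe (ρ : ℝ → ℝ) (u v : ℝ → ℝ) : Prop :=
  ∃ z : ℝ → ℝ, REquiv ρ z (fun _ => (0 : ℝ)) ∧ EvSmall (fun ε => u ε ≤ v ε + z ε)

/-- `|y - x| < r` in `⟨ρ⟩E`. -/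
def NormLt {ρ : ℝ → ℝ} {E : Type*} [NormedAddCommGroup E]
    (x y : RC ρ E) (r : RC ρ ℝ) : Prop :=
  ∃ s : RC ρ ℝ, RC.PosInv s ∧
    ∃ a b : ModNet ρ E, ∃ c d : ModNet ρ ℝ,
      RC.mk a = x ∧ RC.mk b = y ∧ RC.mk c = r ∧ RC.mk d = s ∧
      ∀ ε, II ε → d.1 ε ≤ c.1 ε - ‖b.1 ε - a.1 ε‖

/-- The sharp ball `B_r(x)`. -/
def sharpBall {ρ : ℝ → ℝ} {E : Type*} [NormedAddCommGroup E]
    (x : RC ρ E) (r : RC ρ ℝ) : Set (RC ρ E) :=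
  {y | NormLt x y r}

/-- The sharp topology, generated by the balls with invertible positive radius. -/
def sharpTopology (ρ : ℝ → ℝ) (E : Type*) [NormedAddCommGroup E] :
    TopologicalSpace (RC ρ E) :=
  TopologicalSpace.generateFrom {S | ∃ x r, RC.PosInv r ∧ S = sharpBall x r}

/-- The internal set `[A_ε]`. -/
def InternalSet (ρ : ℝ → ℝ) {E : Type*} [NormedAddCommGroup E]
    (A : ℝ → Set E) : Set (RC ρ E) :=
  {x | ∃ a : ModNet ρ E, RC.mk a = x ∧ EvSmall (fun ε => a.1 ε ∈ A ε)}

/-- The strongly internal set `⟨A_ε⟩`. -/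
def StrongSet (ρ : ℝ → ℝ) {E : Type*} [NormedAddCommGroup E]
    (A : ℝ → Set E) : Set (RC ρ E) :=
  {x | ∀ a : ModNet ρ E, RC.mk a = x → EvSmall (fun ε => a.1 ε ∈ A ε)}

/-- Euclidean `ℝⁿ`. -/
abbrev RVec (n : ℕ) := EuclideanSpace ℝ (Fin n)

/-- Partial derivative in the `i`-th coordinate direction. -/
def pderivI {n : ℕ} {F : Type*} [NormedAddCommGroup F] [NormedSpace ℝ F]
    (i : Fin n) (f : RVec n → F) : RVec n → F :=
  fun x => fderiv ℝ f x (EuclideanSpace.single i 1)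

/-- The multi-index partial derivative `∂^α`. -/
def pderivM {n : ℕ} {F : Type*} [NormedAddCommGroup F] [NormedSpace ℝ F]
    (α : Fin n → ℕ) (f : RVec n → F) : RVec n → F :=
  (List.finRange n).foldr (fun i g => (pderivI i)^[α i] g) f

/-- A net of smooth functions `f_ε ∈ C^∞(Ω_ε, F)` defining a generalized smooth
function of type `X → Y`. -/
structure DefinesGSF (ρ : ℝ → ℝ) {n : ℕ} {F : Type*} [NormedAddCommGroup F]
    [NormedSpace ℝ F] (Ω : ℝ → Set (RVec n)) (f : ℝ → RVec n → F)
    (X : Set (RC ρ (RVec n))) (Y : Set (RC ρ F)) : Prop where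
  open' : ∀ ε, II ε → IsOpen (Ω ε)
  smooth : ∀ ε, II ε → ContDiffOn ℝ (⊤ : ℕ∞) (f ε) (Ω ε)
  domain : X ⊆ StrongSet ρ Ω
  val_mod : ∀ a : ModNet ρ (RVec n), RC.mk a ∈ X → Moderate ρ (fun ε => f ε (a.1 ε))
  val_mem : ∀ a : ModNet ρ (RVec n), RC.mk a ∈ X →
    ∀ hm : Moderate ρ (fun ε => f ε (a.1 ε)), RC.mk ⟨_, hm⟩ ∈ Y
  deriv_mod : ∀ a : ModNet ρ (RVec n), RC.mk a ∈ X → ∀ α : Fin n → ℕ,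
    Moderate ρ (fun ε => pderivM α (f ε) (a.1 ε))

/-- `f : X → Y` is a generalized smooth function. -/
def IsGSFOn (ρ : ℝ → ℝ) {n : ℕ} {F : Type*} [NormedAddCommGroup F] [NormedSpace ℝ F]
    (f : RC ρ (RVec n) → RC ρ F) (X : Set (RC ρ (RVec n))) (Y : Set (RC ρ F)) : Prop :=
  ∃ Ω fn, DefinesGSF ρ Ω fn X Y ∧
    ∀ a : ModNet ρ (RVec n), RC.mk a ∈ X →
      ∀ hm : Moderate ρ (fun ε => fn ε (a.1 ε)), f (RC.mk a) = RC.mk ⟨_, hm⟩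

/-- One-dimensional version: a net of smooth functions `f_ε ∈ C^∞(Ω_ε, ℝ)`,
`Ω_ε ⊆ ℝ`, defining a generalized smooth function of type `X → Y`. -/
structure DefinesGSF1 (ρ : ℝ → ℝ) (Ω : ℝ → Set ℝ) (f : ℝ → ℝ → ℝ)
    (X Y : Set (RC ρ ℝ)) : Prop where
  open' : ∀ ε, II ε → IsOpen (Ω ε)
  smooth : ∀ ε, II ε → ContDiffOn ℝ (⊤ : ℕ∞) (f ε) (Ω ε)
  domain : X ⊆ StrongSet ρ Ω
  val_mod : ∀ a : ModNet ρ ℝ, RC.mk a ∈ X → Moderate ρ (fun ε => f ε (a.1 ε))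
  val_mem : ∀ a : ModNet ρ ℝ, RC.mk a ∈ X →
    ∀ hm : Moderate ρ (fun ε => f ε (a.1 ε)), RC.mk ⟨_, hm⟩ ∈ Y
  deriv_mod : ∀ a : ModNet ρ ℝ, RC.mk a ∈ X → ∀ k : ℕ,
    Moderate ρ (fun ε => iteratedDeriv k (f ε) (a.1 ε))

/-- `f : X → Y` (`X, Y ⊆ ⟨ρ⟩ℝ`) is a generalized smooth function. -/
def IsGSFOn1 (ρ : ℝ → ℝ) (f : RC ρ ℝ → RC ρ ℝ) (X Y : Set (RC ρ ℝ)) : Prop :=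
  ∃ Ω fn, DefinesGSF1 ρ Ω fn X Y ∧
    ∀ a : ModNet ρ ℝ, RC.mk a ∈ X →
      ∀ hm : Moderate ρ (fun ε => fn ε (a.1 ε)), f (RC.mk a) = RC.mk ⟨_, hm⟩

/-- The interval `[a,b] ⊆ ⟨ρ⟩ℝ`. -/
def RCIcc {ρ : ℝ → ℝ} (a b : RC ρ ℝ) : Set (RC ρ ℝ) := {x | RC.Le a x ∧ RC.Le x b}

/-- The interval `(a,b) ⊆ ⟨ρ⟩ℝ`. -/
def RCIoo {ρ : ℝ → ℝ} (a b : RC ρ ℝ) : Set (RC ρ ℝ) := {x | RC.Lt a x ∧ RC.Lt x b}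

/-- A sharply bounded net of sets. -/
def SharplyBdd (ρ : ℝ → ℝ) {E : Type*} [NormedAddCommGroup E] (A : ℝ → Set E) : Prop :=
  ∃ N : ℕ, EvSmall (fun ε => ∀ y ∈ A ε, ‖y‖ ≤ ρ ε ^ (-(N : ℤ)))

theorem EvSmall.and' {P Q : ℝ → Prop} (hP : EvSmall P) (hQ : EvSmall Q) :
    EvSmall (fun ε => P ε ∧ Q ε) := by
  obtain ⟨a, ha0, ha1, hP⟩ := hP
  obtain ⟨b, hb0, hb1, hQ⟩ := hQ
  exact ⟨min a b, lt_min ha0 hb0, (min_le_left a b).trans ha1,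
    fun ε hε hle => ⟨hP ε hε (hle.trans (min_le_left a b)),
      hQ ε hε (hle.trans (min_le_right a b))⟩⟩

theorem EvSmall.mono' {P Q : ℝ → Prop} (hP : EvSmall P)
    (h : ∀ ε, II ε → P ε → Q ε) : EvSmall Q := by
  obtain ⟨a, ha0, ha1, hP⟩ := hP
  exact ⟨a, ha0, ha1, fun ε hε hle => h ε ⟨hε, hle.trans ha1⟩ (hP ε hε hle)⟩

theorem moderate_of_or {ρ : ℝ → ℝ} (hρ : IsGauge ρ) {E : Type*} [NormedAddCommGroup E]
    {w : ℝ → E} (N₁ N₂ : ℕ)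
    (h : EvSmall (fun ε => ‖w ε‖ ≤ ρ ε ^ (-(N₁ : ℤ)) ∨ ‖w ε‖ ≤ ρ ε ^ (-(N₂ : ℤ)))) :
    Moderate ρ w := by
  refine ⟨max N₁ N₂, h.mono' fun ε hε hle => ?_⟩
  have hpos := hρ.pos ε hε
  have hone := hρ.le_one ε hε
  have key : ∀ N : ℕ, N ≤ max N₁ N₂ →
      ρ ε ^ (-(N : ℤ)) ≤ ρ ε ^ (-((max N₁ N₂ : ℕ) : ℤ)) := by
    intro N hN
    rw [zpow_neg, zpow_neg, zpow_natCast, zpow_natCast]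
    exact inv_anti₀ (pow_pos hpos _) (pow_le_pow_of_le_one hpos.le hone hN)
  rcases hle with h1 | h1
  · exact h1.trans (key N₁ (le_max_left _ _))
  · exact h1.trans (key N₂ (le_max_right _ _))

theorem requiv_of_evsmall_eq {ρ : ℝ → ℝ} (hρ : IsGauge ρ) {E : Type*}
    [NormedAddCommGroup E] {u v : ℝ → E} (h : EvSmall (fun ε => u ε = v ε)) :
    REquiv ρ u v := by
  intro m
  refine h.mono' fun ε hε heq => ?_
  rw [heq, sub_self, norm_zero]
  exact pow_nonneg (hρ.pos ε hε).le m


/-- extreme value theorem for GSF on a nonempty internal set generated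
by a sharply bounded net of compact sets (Corollary `cor:extremeValues`). -/
theorem stmt_17 {ρ : ℝ → ℝ} (hρ : IsGauge ρ) {n : ℕ}
    (X : Set (RC ρ (RVec n))) (f : RC ρ (RVec n) → RC ρ ℝ)
    (hf : IsGSFOn ρ f X Set.univ)
    (K : ℝ → Set (RVec n)) (hKcpt : ∀ ε, II ε → IsCompact (K ε))
    (hKbdd : SharplyBdd ρ K)
    (hne : (InternalSet ρ K).Nonempty) (hKX : InternalSet ρ K ⊆ X) :
    ∃ m ∈ InternalSet ρ K, ∃ M ∈ InternalSet ρ K,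
      ∀ x ∈ InternalSet ρ K, RC.Le (f m) (f x) ∧ RC.Le (f x) (f M) := by
    classical
  obtain ⟨Om, fn, hdef, hval⟩ := hf
  obtain ⟨x₀, k, hkx₀, hkK⟩ := hne
  obtain ⟨Nb, hNb⟩ := hKbdd
  obtain ⟨Nk, hNk⟩ := k.2
  -- Step A : K ε ⊆ Om ε for ε small
  have hKΩ : EvSmall (fun ε => K ε ⊆ Om ε) := by
    by_contra hcon
    set bad : ℝ → Prop := fun ε => ∃ y, y ∈ K ε ∧ y ∉ Om ε with hbad
    set w : ℝ → RVec n := fun ε => if h : bad ε then h.choose else k.1 ε with hw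
    have hwK : EvSmall (fun ε => w ε ∈ K ε) := by
      refine hkK.mono' fun ε _ hk => ?_
      by_cases h : bad ε
      · simp only [hw, dif_pos h]; exact h.choose_spec.1
      · simp only [hw, dif_neg h]; exact hk
    have hwmod : Moderate ρ w := by
      refine moderate_of_or hρ Nb Nk (((hNb.and' hNk)).mono' fun ε _ hb => ?_)
      by_cases h : bad ε
      · left; simp only [hw, dif_pos h]; exact hb.1 _ h.choose_spec.1
      · right; simp only [hw, dif_neg h]; exact hb.2
    have hWint : RC.mk (⟨w, hwmod⟩ : ModNet ρ (RVec n)) ∈ InternalSet ρ K :=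
      ⟨⟨w, hwmod⟩, rfl, hwK⟩
    have hWΩ := hdef.domain (hKX hWint) ⟨w, hwmod⟩ rfl
    obtain ⟨ε₃, h30, h31, h3⟩ := hWΩ
    simp only [EvSmall, not_exists, not_and] at hcon
    have hcon2 := hcon ε₃ h30 h31
    push_neg at hcon2
    obtain ⟨ε, hε0, hεle, hns⟩ := hcon2
    rw [Set.not_subset] at hns
    obtain ⟨y, hyK, hyΩ⟩ := hns
    have hbadε : bad ε := ⟨y, hyK, hyΩ⟩
    have h3' := h3 ε hε0 hεle
    simp only [hw, dif_pos hbadε] at h3'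
    exact hbadε.choose_spec.2 h3'
  set P : ℝ → Prop := fun ε => (K ε).Nonempty ∧ K ε ⊆ Om ε ∧ II ε with hPdef
  have hPsmall : EvSmall P :=
    (hkK.and' hKΩ).mono' fun ε hε h => ⟨⟨_, h.1⟩, h.2, hε⟩
  have hMex : ∀ ε, P ε → ∃ x ∈ K ε, IsMaxOn (fn ε) (K ε) x := fun ε h =>
    (hKcpt ε h.2.2).exists_isMaxOn h.1 ((hdef.smooth ε h.2.2).continuousOn.mono h.2.1)
  have hmex : ∀ ε, P ε → ∃ x ∈ K ε, IsMinOn (fn ε) (K ε) x := fun ε h =>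
    (hKcpt ε h.2.2).exists_isMinOn h.1 ((hdef.smooth ε h.2.2).continuousOn.mono h.2.1)
  set MN : ℝ → RVec n := fun ε => if h : P ε then (hMex ε h).choose else k.1 ε with hMNd
  set mn : ℝ → RVec n := fun ε => if h : P ε then (hmex ε h).choose else k.1 ε with hmnd
  have hMNmem : ∀ ε, P ε → MN ε ∈ K ε ∧ IsMaxOn (fn ε) (K ε) (MN ε) := by
    intro ε h
    simp only [hMNd, dif_pos h]
    exact (hMex ε h).choose_spec
  have hmnmem : ∀ ε, P ε → mn ε ∈ K ε ∧ IsMinOn (fn ε) (K ε) (mn ε) := by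
    intro ε h
    simp only [hmnd, dif_pos h]
    exact (hmex ε h).choose_spec
  have hMNK : EvSmall (fun ε => MN ε ∈ K ε) := hPsmall.mono' fun ε _ h => (hMNmem ε h).1
  have hmnK : EvSmall (fun ε => mn ε ∈ K ε) := hPsmall.mono' fun ε _ h => (hmnmem ε h).1
  have hMNmod : Moderate ρ MN := ⟨Nb, (hNb.and' hMNK).mono' fun ε _ h => h.1 _ h.2⟩
  have hmnmod : Moderate ρ mn := ⟨Nb, (hNb.and' hmnK).mono' fun ε _ h => h.1 _ h.2⟩
  set Mm : ModNet ρ (RVec n) := ⟨MN, hMNmod⟩ with hMm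
  set mm : ModNet ρ (RVec n) := ⟨mn, hmnmod⟩ with hmm
  have hMint : RC.mk Mm ∈ InternalSet ρ K := ⟨Mm, rfl, hMNK⟩
  have hmint : RC.mk mm ∈ InternalSet ρ K := ⟨mm, rfl, hmnK⟩
  have hMX := hKX hMint
  have hmX := hKX hmint
  have modM := hdef.val_mod Mm hMX
  have modm := hdef.val_mod mm hmX
  have hfM := hval Mm hMX modM
  have hfm := hval mm hmX modm
  refine ⟨RC.mk mm, hmint, RC.mk Mm, hMint, ?_⟩
  rintro x ⟨a, rfl, haK⟩
  have haX := hKX ⟨a, rfl, haK⟩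
  have modA := hdef.val_mod a haX
  have hfa := hval a haX modA
  constructor
  · -- f m ≤ f x
    have modmax : Moderate ρ (fun ε => max (fn ε (a.1 ε)) (fn ε (mm.1 ε))) := by
      obtain ⟨N₁, h₁⟩ := modA
      obtain ⟨N₂, h₂⟩ := modm
      refine moderate_of_or hρ N₁ N₂ ((h₁.and' h₂).mono' fun ε _ h => ?_)
      rcases max_choice (fn ε (a.1 ε)) (fn ε (mm.1 ε)) with he | he
      · left; show ‖max (fn ε (a.1 ε)) (fn ε (mm.1 ε))‖ ≤ _; rw [he]; exact h.1
      · right; show ‖max (fn ε (a.1 ε)) (fn ε (mm.1 ε))‖ ≤ _; rw [he]; exact h.2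
    have heq : EvSmall (fun ε => max (fn ε (a.1 ε)) (fn ε (mm.1 ε)) = fn ε (a.1 ε)) :=
      (hPsmall.and' haK).mono' fun ε _ h =>
        max_eq_left (isMinOn_iff.mp (hmnmem ε h.1).2 _ h.2)
    refine ⟨⟨fun ε => fn ε (mm.1 ε), modm⟩,
      ⟨fun ε => max (fn ε (a.1 ε)) (fn ε (mm.1 ε)), modmax⟩, hfm.symm, ?_,
      fun ε _ => le_max_right _ _⟩
    rw [hfa]
    exact Quot.sound (requiv_of_evsmall_eq hρ heq)
  · -- f x ≤ f M
    have modmin : Moderate ρ (fun ε => min (fn ε (a.1 ε)) (fn ε (Mm.1 ε))) := by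
      obtain ⟨N₁, h₁⟩ := modA
      obtain ⟨N₂, h₂⟩ := modM
      refine moderate_of_or hρ N₁ N₂ ((h₁.and' h₂).mono' fun ε _ h => ?_)
      rcases min_choice (fn ε (a.1 ε)) (fn ε (Mm.1 ε)) with he | he
      · left; show ‖min (fn ε (a.1 ε)) (fn ε (Mm.1 ε))‖ ≤ _; rw [he]; exact h.1
      · right; show ‖min (fn ε (a.1 ε)) (fn ε (Mm.1 ε))‖ ≤ _; rw [he]; exact h.2
    have heq : EvSmall (fun ε => min (fn ε (a.1 ε)) (fn ε (Mm.1 ε)) = fn ε (a.1 ε)) :=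
      (hPsmall.and' haK).mono' fun ε _ h =>
        min_eq_left (isMaxOn_iff.mp (hMNmem ε h.1).2 _ h.2)
    refine ⟨⟨fun ε => min (fn ε (a.1 ε)) (fn ε (Mm.1 ε)), modmin⟩,
      ⟨fun ε => fn ε (Mm.1 ε), modM⟩, ?_, hfM.symm,
      fun ε _ => min_le_right _ _⟩
    rw [hfa]
    exact Quot.sound (requiv_of_evsmall_eq hρ heq)
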